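/- Let (u, r, e) be a solution of the Yang monopole equations of motion on an open interval I, with associated position curve x : I → ℝ⁵∖{0}. Then for all t ∈ I, the acceleration satisfies ⟨ẍ(t), x(t)⟩ = 0 and ⟨ẍ(t), ẋ(t)⟩ = 0; in particular the speed |ẋ(t)| is constant on I. -/

import Mathlib

open scoped InnerProductSpace

noncomputable section

/-- The 4×4 matrix `E` (built from the charge vector `e ∈ ℝ³`, with rows
`(0, e¹, e², e³)`, `(−e¹, 0, −e³, e²)`, `(−e², e³, 0, −e¹)`, `(−e³, −e², e¹, 0)`)
applied to `w ∈ ℝ⁴`. -/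
def Eop (e : EuclideanSpace ℝ (Fin 3)) (w : EuclideanSpace ℝ (Fin 4)) :
    EuclideanSpace ℝ (Fin 4) :=
  (WithLp.equiv 2 (Fin 4 → ℝ)).symm
    ![e 0 * w 1 + e 1 * w 2 + e 2 * w 3,
      -(e 0) * w 0 - e 2 * w 2 + e 1 * w 3,
      -(e 1) * w 0 + e 2 * w 1 - e 0 * w 3,
      -(e 2) * w 0 - e 1 * w 1 + e 0 * w 2]

/-- The 3×4 matrix `A` (with rows `A₁ = (−u₂, u₁, u₄, −u₃)/(|u|²+1)`,
`A₂ = (−u₃, −u₄, u₁, u₂)/(|u|²+1)`, `A₃ = (−u₄, u₃, −u₂, u₁)/(|u|²+1)`) applied to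
`w ∈ ℝ⁴`, giving `(⟨A₁, w⟩, ⟨A₂, w⟩, ⟨A₃, w⟩) ∈ ℝ³`. -/
def Aop (u w : EuclideanSpace ℝ (Fin 4)) : EuclideanSpace ℝ (Fin 3) :=
  (‖u‖ ^ 2 + 1)⁻¹ • (WithLp.equiv 2 (Fin 3 → ℝ)).symm
    ![-(u 1) * w 0 + u 0 * w 1 + u 3 * w 2 - u 2 * w 3,
      -(u 2) * w 0 - u 3 * w 1 + u 0 * w 2 + u 1 * w 3,
      -(u 3) * w 0 + u 2 * w 1 - u 1 * w 2 + u 0 * w 3]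

/-- The antisymmetric 3×3 matrix `B` (with rows `(0, −B₃, B₂)`, `(B₃, 0, −B₁)`,
`(−B₂, B₁, 0)`, built from `b = (B₁, B₂, B₃) = A u̇`) applied to `e ∈ ℝ³`. -/
def Bop (b e : EuclideanSpace ℝ (Fin 3)) : EuclideanSpace ℝ (Fin 3) :=
  (WithLp.equiv 2 (Fin 3 → ℝ)).symm
    ![-(b 2) * e 1 + b 1 * e 2,
      b 2 * e 0 - b 0 * e 2,
      -(b 1) * e 0 + b 0 * e 1]

/-- `(u, r, e)` (with derivatives `u', u''`, `r', r''`, `e'`) is a solution of the Yang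
monopole equations of motion on `I` (the Poincaré problem in `ℝ⁵`, in stereographic
coordinates): `u : I → ℝ⁴` and `r : I → (0, ∞)` are twice continuously differentiable,
`e : I → ℝ³` is continuously differentiable, and the three equations of motion hold. -/
def IsYangSolution (I : Set ℝ)
    (u u' u'' : ℝ → EuclideanSpace ℝ (Fin 4))
    (r r' r'' : ℝ → ℝ)
    (e e' : ℝ → EuclideanSpace ℝ (Fin 3)) : Prop :=
  (∀ t ∈ I, HasDerivAt u (u' t) t) ∧ (∀ t ∈ I, HasDerivAt u' (u'' t) t) ∧
  ContinuousOn u'' I ∧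
  (∀ t ∈ I, HasDerivAt r (r' t) t) ∧ (∀ t ∈ I, HasDerivAt r' (r'' t) t) ∧
  ContinuousOn r'' I ∧
  (∀ t ∈ I, HasDerivAt e (e' t) t) ∧ ContinuousOn e' I ∧
  (∀ t ∈ I, 0 < r t) ∧
  (∀ t ∈ I,
    u'' t + (2 * ‖u' t‖ ^ 2 / (‖u t‖ ^ 2 + 1)) • u t
        - (4 * ⟪u t, u' t⟫_ℝ / (‖u t‖ ^ 2 + 1)) • u' t
        + (2 * r' t / r t) • u' t
      = (1 / (2 * r t ^ 2)) • Eop (e t) (u' t)) ∧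
  (∀ t ∈ I, r'' t = 4 * r t * ‖u' t‖ ^ 2 / (‖u t‖ ^ 2 + 1) ^ 2) ∧
  (∀ t ∈ I, e' t = (-2 : ℝ) • Bop (Aop (u t) (u' t)) (e t))

/-- The associated position curve in `ℝ⁵ = ℝ⁴ × ℝ`:
`x = (2 r u/(|u|²+1), r (|u|²−1)/(|u|²+1))`. -/
def yangX (u : EuclideanSpace ℝ (Fin 4)) (r : ℝ) : EuclideanSpace ℝ (Fin 5) :=
  (WithLp.equiv 2 (Fin 5 → ℝ)).symm
    ![2 * r * u 0 / (‖u‖ ^ 2 + 1),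
      2 * r * u 1 / (‖u‖ ^ 2 + 1),
      2 * r * u 2 / (‖u‖ ^ 2 + 1),
      2 * r * u 3 / (‖u‖ ^ 2 + 1),
      r * (‖u‖ ^ 2 - 1) / (‖u‖ ^ 2 + 1)]

/-- The associated vector `L ∈ ℝ⁵ = ℝ⁴ × ℝ`:
`L = ( ((|e|² − 4r²⟨A u̇, e⟩) u + 2r² E u̇)/(2(|u|²+1)),
       2r²⟨A u̇, e⟩/(|u|²+1) + (|e|²/4)(|u|²−1)/(|u|²+1) )`. -/
def yangL (u u' : EuclideanSpace ℝ (Fin 4)) (r : ℝ) (e : EuclideanSpace ℝ (Fin 3)) :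
    EuclideanSpace ℝ (Fin 5) :=
  (WithLp.equiv 2 (Fin 5 → ℝ)).symm
    ![((‖e‖ ^ 2 - 4 * r ^ 2 * ⟪Aop u u', e⟫_ℝ) * u 0 + 2 * r ^ 2 * Eop e u' 0)
        / (2 * (‖u‖ ^ 2 + 1)),
      ((‖e‖ ^ 2 - 4 * r ^ 2 * ⟪Aop u u', e⟫_ℝ) * u 1 + 2 * r ^ 2 * Eop e u' 1)
        / (2 * (‖u‖ ^ 2 + 1)),
      ((‖e‖ ^ 2 - 4 * r ^ 2 * ⟪Aop u u', e⟫_ℝ) * u 2 + 2 * r ^ 2 * Eop e u' 2)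
        / (2 * (‖u‖ ^ 2 + 1)),
      ((‖e‖ ^ 2 - 4 * r ^ 2 * ⟪Aop u u', e⟫_ℝ) * u 3 + 2 * r ^ 2 * Eop e u' 3)
        / (2 * (‖u‖ ^ 2 + 1)),
      2 * r ^ 2 * ⟪Aop u u', e⟫_ℝ / (‖u‖ ^ 2 + 1)
        + (‖e‖ ^ 2 / 4) * (‖u‖ ^ 2 - 1) / (‖u‖ ^ 2 + 1)]

/-!
In these coordinates `x = r σ(u)`, where `σ` is inverse stereographic projection onto the unit
sphere `S⁴ ⊂ ℝ⁵`, a conformal map with factor `2/(|u|²+1)`. Hence `⟨x, ẋ⟩ = r ṙ` and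
`|ẋ|² = ṙ² + 4r²|u̇|²/(|u|²+1)²`. Differentiating the first identity and inserting the radial
equation `r̈ = 4r|u̇|²/(|u|²+1)²` gives `⟨ẍ, x⟩ = 0`. The right-hand side of the second identity is
conserved: pairing the `u`-equation with `u̇` kills the charge term, since `E` is antisymmetric, and
what remains cancels against the radial equation. So `⟨ẍ, ẋ⟩ = 0`, and `|ẋ|` is constant on the
interval `I`.
-/

section Calculus

variable {F : Type*} [NormedAddCommGroup F] [NormedSpace ℝ F] {I : Set ℝ} {f g : ℝ → F}
  {f' g' : F} {t : ℝ}

lemma HasDerivAt.unique_of_eqOn (hI : IsOpen I) (hfg : Set.EqOn f g I) (ht : t ∈ I)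
    (hf : HasDerivAt f f' t) (hg : HasDerivAt g g' t) : f' = g' :=
  hf.unique (hg.congr_of_eventuallyEq (Filter.eventuallyEq_of_mem (hI.mem_nhds ht) hfg))

lemma IsOpen.norm_eq_of_inner_deriv_eq_zero {E : Type*} [NormedAddCommGroup E]
    [InnerProductSpace ℝ E] (hI : IsOpen I) (hIconn : I.OrdConnected) {y y' : ℝ → E}
    (hy : ∀ t ∈ I, HasDerivAt y (y' t) t) (horth : ∀ t ∈ I, ⟪y t, y' t⟫_ℝ = 0) :
    ∀ s ∈ I, ∀ t ∈ I, ‖y s‖ = ‖y t‖ := by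
  have hderiv : ∀ t ∈ I, HasDerivAt (‖y ·‖ ^ 2) 0 t := fun t ht => by
    simpa [horth t ht] using (hy t ht).norm_sq
  intro s hs t ht
  have hsq : ‖y s‖ ^ 2 = ‖y t‖ ^ 2 :=
    hI.is_const_of_deriv_eq_zero hIconn.isPreconnected
      (fun τ hτ => (hderiv τ hτ).differentiableAt.differentiableWithinAt)
      (fun τ hτ => (hderiv τ hτ).deriv) hs ht
  exact (pow_left_inj₀ (norm_nonneg _) (norm_nonneg _) two_ne_zero).mp hsq

end Calculus

def embedR5 : EuclideanSpace ℝ (Fin 4) →ₗᵢ[ℝ] EuclideanSpace ℝ (Fin 5) where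
  toFun v := WithLp.toLp 2 ![v 0, v 1, v 2, v 3, 0]
  map_add' v w := by ext i; fin_cases i <;> simp
  map_smul' c v := by ext i; fin_cases i <;> simp
  norm_map' v := by
    simp [EuclideanSpace.norm_eq, Fin.sum_univ_five, Fin.sum_univ_four]

def northPole : EuclideanSpace ℝ (Fin 5) := EuclideanSpace.single 4 1

@[simp] lemma norm_northPole : ‖northPole‖ = 1 := by simp [northPole]

@[simp] lemma inner_northPole_embedR5 (v : EuclideanSpace ℝ (Fin 4)) :
    ⟪northPole, embedR5 v⟫_ℝ = 0 := by
  simp [northPole, embedR5, EuclideanSpace.inner_single_left]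

section Stereographic

variable (u v : EuclideanSpace ℝ (Fin 4))

lemma norm_embedR5_sub_northPole_sq : ‖embedR5 u - northPole‖ ^ 2 = ‖u‖ ^ 2 + 1 := by
  simp [norm_sub_sq_real, real_inner_comm northPole]

lemma inner_northPole_embedR5_sub_northPole : ⟪northPole, embedR5 u - northPole⟫_ℝ = -1 := by
  simp [inner_sub_right]

lemma inner_embedR5_sub_northPole_embedR5 :
    ⟪embedR5 u - northPole, embedR5 v⟫_ℝ = ⟪u, v⟫_ℝ := by
  simp [inner_sub_left]

def invStereo : EuclideanSpace ℝ (Fin 5) :=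
  northPole + (2 / (‖u‖ ^ 2 + 1)) • (embedR5 u - northPole)

def invStereoDeriv : EuclideanSpace ℝ (Fin 5) :=
  (-4 * ⟪u, v⟫_ℝ / (‖u‖ ^ 2 + 1) ^ 2) • (embedR5 u - northPole) + (2 / (‖u‖ ^ 2 + 1)) • embedR5 v

lemma yangX_eq_smul_invStereo (r : ℝ) : yangX u r = r • invStereo u := by
  have hN : ‖u‖ ^ 2 + 1 ≠ 0 := by positivity
  ext i
  fin_cases i <;>
    simp only [yangX, invStereo, northPole, embedR5, LinearIsometry.coe_mk, LinearMap.coe_mk,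
      AddHom.coe_mk, WithLp.equiv_symm_apply, PiLp.add_apply, PiLp.smul_apply, PiLp.sub_apply,
      Fin.isValue, Fin.zero_eta, Fin.mk_one, Fin.reduceFinMk, Matrix.cons_val_zero,
      Matrix.cons_val_one, Matrix.cons_val, ne_eq, Fin.reduceEq, not_false_eq_true,
      PiLp.single_eq_of_ne, PiLp.single_eq_same, smul_eq_mul] <;>
    field_simp <;> ring

lemma norm_invStereo : ‖invStereo u‖ = 1 := by
  have hN : ‖u‖ ^ 2 + 1 ≠ 0 := by positivity
  rw [← pow_eq_one_iff_of_nonneg (norm_nonneg _) two_ne_zero, invStereo, norm_add_sq_real,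
    norm_smul, mul_pow, Real.norm_eq_abs, sq_abs, real_inner_smul_right,
    norm_embedR5_sub_northPole_sq, inner_northPole_embedR5_sub_northPole, norm_northPole]
  field_simp
  ring

lemma inner_invStereo_invStereoDeriv : ⟪invStereo u, invStereoDeriv u v⟫_ℝ = 0 := by
  have hN : ‖u‖ ^ 2 + 1 ≠ 0 := by positivity
  simp only [invStereo, invStereoDeriv, inner_add_left, inner_add_right, real_inner_smul_left,
    real_inner_smul_right, real_inner_self_eq_norm_sq, norm_embedR5_sub_northPole_sq,
    inner_northPole_embedR5_sub_northPole, inner_embedR5_sub_northPole_embedR5,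
    inner_northPole_embedR5]
  field_simp
  ring

lemma norm_invStereoDeriv_sq :
    ‖invStereoDeriv u v‖ ^ 2 = 4 * ‖v‖ ^ 2 / (‖u‖ ^ 2 + 1) ^ 2 := by
  have hN : ‖u‖ ^ 2 + 1 ≠ 0 := by positivity
  rw [invStereoDeriv, norm_add_sq_real, norm_smul, norm_smul, mul_pow, mul_pow, Real.norm_eq_abs,
    Real.norm_eq_abs, sq_abs, sq_abs, real_inner_smul_left, real_inner_smul_right,
    norm_embedR5_sub_northPole_sq, inner_embedR5_sub_northPole_embedR5, LinearIsometry.norm_map]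
  field_simp
  ring

end Stereographic

lemma hasDerivAt_invStereo {u : ℝ → EuclideanSpace ℝ (Fin 4)} {v : EuclideanSpace ℝ (Fin 4)}
    {t : ℝ} (hu : HasDerivAt u v t) :
    HasDerivAt (fun s => invStereo (u s)) (invStereoDeriv (u t) v) t := by
  have hN : HasDerivAt (fun s => ‖u s‖ ^ 2 + 1) (2 * ⟪u t, v⟫_ℝ) t := hu.norm_sq.add_const 1
  have hf : HasDerivAt (fun s => 2 / (‖u s‖ ^ 2 + 1))
      (-4 * ⟪u t, v⟫_ℝ / (‖u t‖ ^ 2 + 1) ^ 2) t := by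
    refine ((hasDerivAt_const t (2 : ℝ)).div hN (by positivity)).congr_deriv ?_
    ring
  have hw : HasDerivAt (fun s => embedR5 (u s) - northPole) (embedR5 v) t :=
    (embedR5.toContinuousLinearMap.hasFDerivAt.comp_hasDerivAt t hu).sub_const northPole
  exact ((hf.smul hw).const_add northPole).congr_deriv (add_comm _ _)

def yangVelocity (u u' : EuclideanSpace ℝ (Fin 4)) (r r' : ℝ) : EuclideanSpace ℝ (Fin 5) :=
  r' • invStereo u + r • invStereoDeriv u u'

lemma hasDerivAt_yangX {u : ℝ → EuclideanSpace ℝ (Fin 4)} {u' : EuclideanSpace ℝ (Fin 4)}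
    {r : ℝ → ℝ} {r' t : ℝ} (hu : HasDerivAt u u' t) (hr : HasDerivAt r r' t) :
    HasDerivAt (fun s => yangX (u s) (r s)) (yangVelocity (u t) u' (r t) r') t := by
  simp only [yangX_eq_smul_invStereo]
  exact (hr.smul (hasDerivAt_invStereo hu)).congr_deriv (add_comm _ _)

section Velocity

variable (u u' : EuclideanSpace ℝ (Fin 4)) (r r' : ℝ)

lemma inner_yangX_yangVelocity : ⟪yangX u r, yangVelocity u u' r r'⟫_ℝ = r * r' := by
  simp only [yangX_eq_smul_invStereo, yangVelocity, inner_add_right, real_inner_smul_left,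
    real_inner_smul_right, real_inner_self_eq_norm_sq, norm_invStereo,
    inner_invStereo_invStereoDeriv]
  ring

lemma norm_yangVelocity_sq :
    ‖yangVelocity u u' r r'‖ ^ 2 = r' ^ 2 + 4 * r ^ 2 * ‖u'‖ ^ 2 / (‖u‖ ^ 2 + 1) ^ 2 := by
  rw [yangVelocity, norm_add_sq_real, norm_smul, norm_smul, mul_pow, mul_pow, Real.norm_eq_abs,
    Real.norm_eq_abs, sq_abs, sq_abs, real_inner_smul_left, real_inner_smul_right,
    inner_invStereo_invStereoDeriv, norm_invStereo, norm_invStereoDeriv_sq]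
  ring

end Velocity

lemma inner_self_Eop (e : EuclideanSpace ℝ (Fin 3)) (v : EuclideanSpace ℝ (Fin 4)) :
    ⟪v, Eop e v⟫_ℝ = 0 := by
  simp only [Eop, WithLp.equiv_symm_apply, PiLp.inner_apply, RCLike.inner_apply, conj_trivial,
    Fin.sum_univ_four, Fin.isValue, Matrix.cons_val_zero, Matrix.cons_val_one, Matrix.cons_val]
  ring

namespace IsYangSolution

variable {I : Set ℝ} {u u' u'' : ℝ → EuclideanSpace ℝ (Fin 4)} {r r' r'' : ℝ → ℝ}
  {e e' : ℝ → EuclideanSpace ℝ (Fin 3)} {t : ℝ}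

lemma inner_deriv_secondDeriv (hsol : IsYangSolution I u u' u'' r r' r'' e e') (ht : t ∈ I) :
    ⟪u' t, u'' t⟫_ℝ = 2 * ⟪u t, u' t⟫_ℝ * ‖u' t‖ ^ 2 / (‖u t‖ ^ 2 + 1)
      - 2 * r' t * ‖u' t‖ ^ 2 / r t := by
  obtain ⟨-, -, -, -, -, -, -, -, -, hu'', -⟩ := hsol
  have h := congrArg (⟪u' t, ·⟫_ℝ) (hu'' t ht)
  simp only [inner_add_right, inner_sub_right, real_inner_smul_right, inner_self_Eop,
    real_inner_self_eq_norm_sq, real_inner_comm (u t)] at h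
  linear_combination h

lemma hasDerivAt_speed_sq (hsol : IsYangSolution I u u' u'' r r' r'' e e') (ht : t ∈ I) :
    HasDerivAt (fun s => r' s ^ 2 + 4 * r s ^ 2 * ‖u' s‖ ^ 2 / (‖u s‖ ^ 2 + 1) ^ 2) 0 t := by
  have hacc := hsol.inner_deriv_secondDeriv ht
  obtain ⟨hu, hu', -, hr, hr', -, -, -, hrpos, -, hr'', -⟩ := hsol
  have hN : HasDerivAt (fun s => (‖u s‖ ^ 2 + 1) ^ 2)
      (2 * (‖u t‖ ^ 2 + 1) * (2 * ⟪u t, u' t⟫_ℝ)) t :=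
    (((hu t ht).norm_sq.add_const 1).pow 2).congr_deriv (by norm_num)
  have hnum : HasDerivAt (fun s => 4 * r s ^ 2 * ‖u' s‖ ^ 2)
      (4 * (2 * r t * r' t) * ‖u' t‖ ^ 2 + 4 * r t ^ 2 * (2 * ⟪u' t, u'' t⟫_ℝ)) t :=
    ((((hr t ht).pow 2).const_mul 4).mul (hu' t ht).norm_sq).congr_deriv (by norm_num)
  refine (((hr' t ht).pow 2).add (hnum.div hN (by positivity))).congr_deriv ?_
  rw [hacc, hr'' t ht]
  have hr0 := (hrpos t ht).ne'
  field_simp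
  ring

end IsYangSolution

/-- For a solution `(u, r, e)` of the Yang monopole equations of motion
on an open interval `I`, with position curve `x` (with derivatives `x'`, `x''` on `I`),
the acceleration satisfies `⟨ẍ(t), x(t)⟩ = 0` and `⟨ẍ(t), ẋ(t)⟩ = 0` for all `t ∈ I`;
in particular the speed `|ẋ(t)|` is constant on `I`. -/
theorem yang_acceleration_orthogonal
    (I : Set ℝ) (hIopen : IsOpen I) (hIconn : I.OrdConnected)
    (u u' u'' : ℝ → EuclideanSpace ℝ (Fin 4))
    (r r' r'' : ℝ → ℝ)
    (e e' : ℝ → EuclideanSpace ℝ (Fin 3))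
    (hsol : IsYangSolution I u u' u'' r r' r'' e e')
    (x x' x'' : ℝ → EuclideanSpace ℝ (Fin 5))
    (hx : ∀ t, x t = yangX (u t) (r t))
    (hx1 : ∀ t ∈ I, HasDerivAt x (x' t) t)
    (hx2 : ∀ t ∈ I, HasDerivAt x' (x'' t) t) :
    (∀ t ∈ I, ⟪x'' t, x t⟫_ℝ = 0 ∧ ⟪x'' t, x' t⟫_ℝ = 0) ∧
      (∀ s ∈ I, ∀ t ∈ I, ‖x' s‖ = ‖x' t‖) := by
  obtain rfl : x = fun t => yangX (u t) (r t) := funext hx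
  obtain ⟨hu, -, -, hr, hr', -, -, -, -, -, hr'', -⟩ := id hsol
  have hvel : ∀ t ∈ I, x' t = yangVelocity (u t) (u' t) (r t) (r' t) := fun t ht =>
    (hx1 t ht).unique (hasDerivAt_yangX (hu t ht) (hr t ht))
  have hradial : Set.EqOn (fun t => ⟪yangX (u t) (r t), x' t⟫_ℝ) (fun t => r t * r' t) I :=
    fun t ht => by simp only [hvel t ht, inner_yangX_yangVelocity]
  have hspeed : Set.EqOn (‖x' ·‖ ^ 2)
      (fun t => r' t ^ 2 + 4 * r t ^ 2 * ‖u' t‖ ^ 2 / (‖u t‖ ^ 2 + 1) ^ 2) I :=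
    fun t ht => by simp only [hvel t ht, norm_yangVelocity_sq]
  have hacc_x : ∀ t ∈ I, ⟪x'' t, yangX (u t) (r t)⟫_ℝ = 0 := fun t ht => by
    have h := HasDerivAt.unique_of_eqOn hIopen hradial ht ((hx1 t ht).inner ℝ (hx2 t ht))
      ((hr t ht).mul (hr' t ht))
    have hs : ‖x' t‖ ^ 2 = _ := hspeed ht
    rw [real_inner_self_eq_norm_sq, hr'' t ht] at h
    rw [real_inner_comm]
    linear_combination h - hs
  have hacc_v : ∀ t ∈ I, ⟪x' t, x'' t⟫_ℝ = 0 := fun t ht => by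
    have h := HasDerivAt.unique_of_eqOn hIopen hspeed ht (hx2 t ht).norm_sq
      (hsol.hasDerivAt_speed_sq ht)
    linarith
  exact ⟨fun t ht => ⟨hacc_x t ht, by rw [real_inner_comm]; exact hacc_v t ht⟩,
    hIopen.norm_eq_of_inner_deriv_eq_zero hIconn hx2 hacc_v⟩

end
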